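/- Let E be a real normed vector space and L : E → ℝ be three times continuously differentiable. Let x, x_h ∈ E, set e = x − x_h, and assume L'(x) = 0 and L'(x_h)(e) = 0. If M ≥ 0 is such that the operator norm of the third Fréchet derivative satisfies ‖D³L(x_h + s·e)‖ ≤ M for all s ∈ [0,1], then |L(x) − L(x_h)| ≤ (M/12)·‖e‖³. -/

import Mathlib

/-!
Along the segment, `g s = L (x_h + s • e)` satisfies `g' 0 = g' 1 = 0`, so the trapezoidal rule
applied to `∫₀¹ g'` returns `0` and `L x - L x_h = g 1 - g 0` equals the trapezoidal remainder
`-g''' ξ / 12`, where `g''' ξ = D³L(x_h + ξ e)(e, e, e)` has size at most `M ‖e‖³`. The remainder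
formula comes from applying Rolle's theorem three times to `g` minus its cubic Hermite
interpolant at `0` and `1`, which has double zeros at both nodes.
-/

open Set Polynomial

theorem ContDiff.hasDerivAt_iteratedFDeriv_add_smul_apply
    {𝕜 E F : Type*} [NontriviallyNormedField 𝕜] [NormedAddCommGroup E] [NormedSpace 𝕜 E]
    [NormedAddCommGroup F] [NormedSpace 𝕜 F] {f : E → F} {n : WithTop ℕ∞} {k : ℕ}
    (hf : ContDiff 𝕜 n f) (hk : (k : WithTop ℕ∞) < n) (x v : E) (t : 𝕜) :
    HasDerivAt (fun s : 𝕜 => iteratedFDeriv 𝕜 k f (x + s • v) (fun _ => v))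
      (iteratedFDeriv 𝕜 (k + 1) f (x + t • v) (fun _ => v)) t := by
  have hline : HasDerivAt (fun s : 𝕜 => x + s • v) v t := by
    simpa using ((hasDerivAt_id t).smul_const v).const_add x
  rw [iteratedFDeriv_succ_apply_left]
  exact (ContinuousMultilinearMap.apply 𝕜 (fun _ : Fin k => E) F (fun _ => v)).hasFDerivAt
    |>.comp_hasDerivAt t <|
      ((hf.differentiable_iteratedFDeriv hk) (x + t • v)).hasFDerivAt.comp_hasDerivAt t hline

theorem exists_hasDerivAt_third_eq_zero {f f' f'' f''' : ℝ → ℝ} {a b : ℝ} (hab : a < b)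
    (hf : ∀ x ∈ Icc a b, HasDerivAt f (f' x) x) (hf' : ∀ x ∈ Icc a b, HasDerivAt f' (f'' x) x)
    (hf'' : ∀ x ∈ Icc a b, HasDerivAt f'' (f''' x) x)
    (hfab : f a = f b) (hf'a : f' a = 0) (hf'b : f' b = 0) :
    ∃ ξ ∈ Ioo a b, f''' ξ = 0 := by
  have cont {g g' : ℝ → ℝ} (hg : ∀ x ∈ Icc a b, HasDerivAt g (g' x) x) {c d : ℝ}
      (hcd : Icc c d ⊆ Icc a b) : ContinuousOn g (Icc c d) :=
    fun x hx => (hg x (hcd hx)).continuousAt.continuousWithinAt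
  obtain ⟨c, hc, hf'c⟩ := exists_hasDerivAt_eq_zero hab (cont hf subset_rfl) hfab
    fun x hx => hf x (Ioo_subset_Icc_self hx)
  obtain ⟨d₁, hd₁, hf''d₁⟩ := exists_hasDerivAt_eq_zero hc.1
    (cont hf' (Icc_subset_Icc_right hc.2.le)) (hf'a.trans hf'c.symm)
    fun x hx => hf' x ⟨hx.1.le, hx.2.le.trans hc.2.le⟩
  obtain ⟨d₂, hd₂, hf''d₂⟩ := exists_hasDerivAt_eq_zero hc.2
    (cont hf' (Icc_subset_Icc_left hc.1.le)) (hf'c.trans hf'b.symm)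
    fun x hx => hf' x ⟨hc.1.le.trans hx.1.le, hx.2.le⟩
  obtain ⟨ξ, hξ, hf'''ξ⟩ := exists_hasDerivAt_eq_zero (hd₁.2.trans hd₂.1)
    (cont hf'' (Icc_subset_Icc hd₁.1.le hd₂.2.le)) (hf''d₁.trans hf''d₂.symm)
    fun x hx => hf'' x ⟨hd₁.1.le.trans hx.1.le, hx.2.le.trans hd₂.2.le⟩
  exact ⟨ξ, ⟨hd₁.1.trans hξ.1, hξ.2.trans hd₂.2⟩, hf'''ξ⟩

theorem exists_trapezoid_remainder {g g' g'' g''' : ℝ → ℝ}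
    (hg : ∀ s ∈ Icc (0 : ℝ) 1, HasDerivAt g (g' s) s)
    (hg' : ∀ s ∈ Icc (0 : ℝ) 1, HasDerivAt g' (g'' s) s)
    (hg'' : ∀ s ∈ Icc (0 : ℝ) 1, HasDerivAt g'' (g''' s) s) :
    ∃ ξ ∈ Ioo (0 : ℝ) 1, g 1 - g 0 = (g' 0 + g' 1) / 2 - g''' ξ / 12 := by
  set Δ := g 1 - g 0
  -- the cubic Hermite interpolant of `g` at the nodes `0` and `1`
  set P : ℝ[X] := C (g 0) + C (g' 0) * X + C (3 * Δ - 2 * g' 0 - g' 1) * X ^ 2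
    + C (g' 0 + g' 1 - 2 * Δ) * X ^ 3 with hP
  have hP' : derivative P = C (g' 0) + C (2 * (3 * Δ - 2 * g' 0 - g' 1)) * X
      + C (3 * (g' 0 + g' 1 - 2 * Δ)) * X ^ 2 := by
    simp only [hP, derivative_add, derivative_C, derivative_C_mul_X, derivative_C_mul_X_pow,
      zero_add]
    norm_num [mul_comm]
  obtain ⟨ξ, hξ, h⟩ := exists_hasDerivAt_third_eq_zero (f := fun s => g s - P.eval s) zero_lt_one
    (fun s hs => (hg s hs).sub (P.hasDerivAt s))
    (fun s hs => (hg' s hs).sub (P.derivative.hasDerivAt s))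
    (fun s hs => (hg'' s hs).sub (P.derivative.derivative.hasDerivAt s))
    (by simp only [hP, eval_add, eval_mul, eval_C, eval_X, eval_pow]; ring)
    (by simp only [hP', eval_add, eval_mul, eval_C, eval_X, eval_pow]; ring)
    (by simp only [hP', eval_add, eval_mul, eval_C, eval_X, eval_pow]; ring)
  simp only [hP', derivative_add, derivative_C, derivative_C_mul_X, derivative_C_mul_X_pow,
    zero_add] at h
  norm_num at h
  exact ⟨ξ, hξ, by linarith⟩

theorem dwr_error_third_order_bound_general
    {E : Type*} [NormedAddCommGroup E] [NormedSpace ℝ E]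
    (L : E → ℝ) (hL : ContDiff ℝ 3 L) (x x_h : E) (e : E) (he : e = x - x_h)
    (hstat : fderiv ℝ L x = 0) (hstat_h : fderiv ℝ L x_h e = 0)
    (M : ℝ)
    (hbound : ∀ s ∈ Set.Icc (0:ℝ) 1, ‖iteratedFDeriv ℝ 3 L (x_h + s • e)‖ ≤ M) :
    |L x - L x_h| ≤ M / 12 * ‖e‖ ^ 3 := by
  set g : ℕ → ℝ → ℝ := fun k s => iteratedFDeriv ℝ k L (x_h + s • e) (fun _ => e)
  have hg (k : ℕ) (hk : k < 3) (s : ℝ) : HasDerivAt (g k) (g (k + 1) s) s :=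
    hL.hasDerivAt_iteratedFDeriv_add_smul_apply (by exact_mod_cast hk) x_h e s
  obtain ⟨ξ, hξ, hrem⟩ := exists_trapezoid_remainder (fun s _ => hg 0 (by norm_num) s)
    (fun s _ => hg 1 (by norm_num) s) (fun s _ => hg 2 (by norm_num) s)
  have hx : x_h + e = x := by rw [he, add_sub_cancel]
  have hΔ : L x - L x_h = -g 3 ξ / 12 := by
    simpa [g, hx, hstat, hstat_h, neg_div] using hrem
  have hg3 : |g 3 ξ| ≤ M * ‖e‖ ^ 3 := by
    simpa using (iteratedFDeriv ℝ 3 L (x_h + ξ • e)).le_of_opNorm_le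
      (hbound ξ (Ioo_subset_Icc_self hξ)) (fun _ => e)
  rw [hΔ, abs_div, abs_neg, abs_of_pos (by norm_num : (0 : ℝ) < 12)]
  linarith

/-- Third-order error bound between two stationary values: if `L : E → ℝ` is `C³`,
`L'(x) = 0`, `e = x - x_h`, `L'(x_h)(e) = 0`, and `‖D³L(x_h + s e)‖ ≤ M` for all
`s ∈ [0,1]` with `M ≥ 0`, then `|L(x) - L(x_h)| ≤ (M/12) ‖e‖³`. -/
theorem dwr_error_third_order_bound
    {E : Type*} [NormedAddCommGroup E] [NormedSpace ℝ E]
    (L : E → ℝ) (hL : ContDiff ℝ 3 L) (x x_h : E) (e : E) (he : e = x - x_h)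
    (hstat : fderiv ℝ L x = 0) (hstat_h : fderiv ℝ L x_h e = 0)
    (M : ℝ) (hM : 0 ≤ M)
    (hbound : ∀ s ∈ Set.Icc (0:ℝ) 1, ‖iteratedFDeriv ℝ 3 L (x_h + s • e)‖ ≤ M) :
    |L x - L x_h| ≤ M / 12 * ‖e‖ ^ 3 :=
  dwr_error_third_order_bound_general L hL x x_h e he hstat hstat_h M hbound
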